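/- Let D ∈ M_{k×l}(ℝ) be a non-branching matrix with no zero columns and let R = D·V be a weak column reduction of D. Then the columns of V that have more than one non-zero entry are pairwise orthogonal with respect to the standard inner product on ℝ^l and form a basis of the kernel of the linear map ℝ^l → ℝ^k given by D. -/

import Mathlib

open scoped Classical

/-- A real matrix is *non-branching* if all its entries lie in `{-1, 0, 1}` and every
row has at most two non-zero entries. -/
def NonBranching {k l : ℕ} (D : Matrix (Fin k) (Fin l) ℝ) : Prop :=
  (∀ i j, D i j = -1 ∨ D i j = 0 ∨ D i j = 1) ∧
    ∀ i : Fin k, (Finset.univ.filter fun j => D i j ≠ 0).card ≤ 2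

/-- The `j`-th column of a matrix, as a vector. -/
def col {k l : ℕ} (M : Matrix (Fin k) (Fin l) ℝ) (j : Fin l) : Fin k → ℝ :=
  fun i => M i j

/-- The number of non-zero entries of the `j`-th column (the cardinality of its support). -/
noncomputable def suppCard {k l : ℕ} (M : Matrix (Fin k) (Fin l) ℝ) (j : Fin l) : ℕ :=
  (Finset.univ.filter fun i => M i j ≠ 0).card

/-- `R = D * V` is a *weak column reduction* of `D`:
`V` is upper-triangular with entries in `{-1,0,1}` and diagonal entries in `{-1,1}`,
the non-zero columns of `R` are linearly independent, the supports of the columns of `V`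
with more than one non-zero entry are pairwise disjoint, and the `i`-th column of `V` has
more than one non-zero entry iff the `i`-th column of `R` is zero. -/
def WeakColumnReduction {k l : ℕ} (D R : Matrix (Fin k) (Fin l) ℝ)
    (V : Matrix (Fin l) (Fin l) ℝ) : Prop :=
  R = D * V ∧
  (∀ i j : Fin l, j < i → V i j = 0) ∧
  (∀ i j : Fin l, V i j = -1 ∨ V i j = 0 ∨ V i j = 1) ∧
  (∀ i : Fin l, V i i = -1 ∨ V i i = 1) ∧
  (LinearIndependent ℝ fun j : {j : Fin l // col R j ≠ 0} => col R j.1) ∧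
  (∀ j₁ j₂ : Fin l, j₁ ≠ j₂ → 1 < suppCard V j₁ → 1 < suppCard V j₂ →
    Disjoint (Finset.univ.filter fun i => V i j₁ ≠ 0)
      (Finset.univ.filter fun i => V i j₂ ≠ 0)) ∧
  (∀ j : Fin l, 1 < suppCard V j ↔ col R j = 0)

/-!
A triangular matrix with non-zero diagonal is invertible, so the columns of `V` are independent
and `D` has the same rank as `R = D * V`. The columns of `V` with more than one non-zero entry are
those that `D` sends to the zero columns of `R`; since the other columns of `R` are independent,
there are `l - rank D` of them, so by rank–nullity they span `ker D`. Orthogonality is immediate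
from the disjointness of their supports.
-/

theorem dotProduct_eq_zero_of_disjoint_support {ι R : Type*} [Fintype ι]
    [NonUnitalNonAssocSemiring R] {f g : ι → R}
    (h : Disjoint (Finset.univ.filter fun i => f i ≠ 0) (Finset.univ.filter fun i => g i ≠ 0)) :
    ∑ i, f i * g i = 0 :=
  Finset.sum_eq_zero fun i _ => by
    by_cases hf : f i = 0
    · simp [hf]
    · have hg : g i = 0 := by
        by_contra hg
        exact Finset.disjoint_left.mp h (by simpa using hf) (by simpa using hg)
      simp [hg]

theorem Matrix.isUnit_det_of_isUpperTriangular {K n : Type*} [Field K] [Fintype n]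
    [LinearOrder n] {V : Matrix n n K} (hV : V.IsUpperTriangular) (hdiag : ∀ i, V i i ≠ 0) :
    IsUnit V.det := by
  simpa [Matrix.det_of_isUpperTriangular hV, Finset.prod_ne_zero_iff] using hdiag

theorem Matrix.rank_eq_card_of_linearIndependent_nonzero_cols {K m n : Type*} [Field K]
    [Fintype n] (M : Matrix m n K)
    (h : LinearIndependent K fun j : {j // M.col j ≠ 0} => M.col j) :
    M.rank = Fintype.card {j // M.col j ≠ 0} := by
  have hrange : Set.range (fun j : {j // M.col j ≠ 0} => M.col j) = Set.range M.col \ {0} := by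
    ext v
    simp only [Set.mem_range, Set.mem_sdiff, Set.mem_singleton_iff, Subtype.exists]
    constructor
    · rintro ⟨j, hj, rfl⟩
      exact ⟨⟨j, rfl⟩, hj⟩
    · rintro ⟨⟨j, rfl⟩, hj⟩
      exact ⟨j, hj, rfl⟩
  rw [Matrix.rank_eq_finrank_span_cols, ← Submodule.span_sdiff_singleton_zero, ← hrange,
    finrank_span_eq_card h]

theorem LinearMap.span_eq_ker_of_linearIndependent {K V W ι : Type*} [Field K]
    [AddCommGroup V] [Module K V] [FiniteDimensional K V] [AddCommGroup W] [Module K W]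
    [Fintype ι] (f : V →ₗ[K] W) {v : ι → V} (hv : LinearIndependent K v)
    (hker : ∀ i, f (v i) = 0)
    (hcard : Fintype.card ι + Module.finrank K (LinearMap.range f) = Module.finrank K V) :
    Submodule.span K (Set.range v) = LinearMap.ker f := by
  refine Submodule.eq_of_le_of_finrank_le ?_ ?_
  · exact Submodule.span_le.mpr (Set.range_subset_iff.mpr hker)
  · have := f.finrank_range_add_finrank_ker
    rw [finrank_span_eq_card hv]
    omega

theorem stmt1 {k l : ℕ} (D R : Matrix (Fin k) (Fin l) ℝ) (V : Matrix (Fin l) (Fin l) ℝ)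
    (hred : WeakColumnReduction D R V) :
    (∀ j₁ j₂ : Fin l, 1 < suppCard V j₁ → 1 < suppCard V j₂ → j₁ ≠ j₂ →
      ∑ i : Fin l, V i j₁ * V i j₂ = 0) ∧
    (LinearIndependent ℝ fun j : {j : Fin l // 1 < suppCard V j} => col V j.1) ∧
    Submodule.span ℝ (Set.range fun j : {j : Fin l // 1 < suppCard V j} => col V j.1) =
      LinearMap.ker D.mulVecLin := by
  obtain ⟨rfl, htri, -, hdiag, hindR, hdisj, hzero⟩ := hred
  have hdet : IsUnit V.det := Matrix.isUnit_det_of_isUpperTriangular (fun i j h => htri i j h)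
    fun i => by rcases hdiag i with h | h <;> simp [h]
  have hindV : LinearIndependent ℝ fun j : {j : Fin l // 1 < suppCard V j} => col V j.1 :=
    (Matrix.linearIndependent_cols_iff_isUnit.mpr ((V.isUnit_iff_isUnit_det).mpr hdet)).comp _
      Subtype.coe_injective
  refine ⟨fun j₁ j₂ h₁ h₂ hne => dotProduct_eq_zero_of_disjoint_support (hdisj j₁ j₂ hne h₁ h₂),
    hindV, LinearMap.span_eq_ker_of_linearIndependent _ hindV (fun j => ?_) ?_⟩
  · rw [Matrix.mulVecLin_apply, ← (hzero j).mp j.2]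
    rfl
  · have hrank := (D * V).rank_eq_card_of_linearIndependent_nonzero_cols hindR
    rw [Matrix.rank_mul_eq_left_of_isUnit_det V D hdet] at hrank
    rw [← Matrix.rank, hrank, Module.finrank_fin_fun]
    simp only [← Nat.card_eq_fintype_card]
    rw [Nat.card_congr (Equiv.subtypeEquivRight hzero), ← Nat.card_sum]
    exact (Nat.card_congr (Equiv.sumCompl _)).trans (Nat.card_fin l)
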